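/- arXiv:2403.09091 — 5 statements merged into one kernel-verified Lean document; each statement's English description precedes it below -/
import Mathlib

section
/- Let n ≥ 3 and let B ⊆ SL_n(ℂ) be the subgroup of upper triangular matrices of determinant 1. Under the action A·(v,w) = (A v, (Aᵀ)⁻¹ w) of SL_n(ℂ) on ℂⁿ × ℂⁿ, the B-orbit of the point (e₁ + e_n, e₁) is exactly the set {(v,w) ∈ ℂⁿ × ℂⁿ : ∑_{i=1}^n v_i w_i = 1 and v_n · w₁ ≠ 0}. -/
/-!
If `A` is upper triangular, then `(Aᵀ w)₁ = A₁₁ w₁` and `(A (e₁ + e_n))_n = A_nn`, and both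
diagonal entries are units because their product with the others is `det A = 1`; the pairing
`(A x) ⬝ᵥ ((Aᵀ)⁻¹ y) = x ⬝ᵥ y` is invariant. Conversely, `Aᵀ w = e₁` and `A (e₁ + e_n) = v`
prescribe the first and last columns of `A`, any upper triangular middle columns orthogonal to
`w` will do, and rescaling one of them (here `n ≥ 3` is needed) makes `det A = 1`.
-/

open Matrix

namespace Matrix

section CommRing

variable {R ι : Type*} [CommRing R] [Fintype ι]

theorem mulVec_dotProduct_transpose_inv_mulVec [DecidableEq ι] {A : Matrix ι ι R}
    (hA : IsUnit A.det) (x y : ι → R) : (A *ᵥ x) ⬝ᵥ ((Aᵀ)⁻¹ *ᵥ y) = x ⬝ᵥ y := by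
  rw [← vecMul_transpose, ← dotProduct_mulVec, mulVec_mulVec,
    mul_nonsing_inv _ (by rwa [det_transpose]), one_mulVec]

variable [LinearOrder ι]

theorem IsUpperTriangular.transpose_mulVec_apply_of_isBot {A : Matrix ι ι R}
    (hA : A.IsUpperTriangular) {i₀ : ι} (h₀ : IsBot i₀) (w : ι → R) :
    (Aᵀ *ᵥ w) i₀ = A i₀ i₀ * w i₀ := by
  simp only [mulVec, dotProduct, transpose_apply]
  exact Finset.sum_eq_single i₀ (fun j _ hj => by rw [hA ((h₀ j).lt_of_ne' hj), zero_mul])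
    (by simp)

theorem IsUpperTriangular.isUnit_apply_self_of_det_eq_one {A : Matrix ι ι R}
    (hA : A.IsUpperTriangular) (hdet : A.det = 1) (i : ι) : IsUnit (A i i) := by
  refine isUnit_of_dvd_one ?_
  rw [← hdet, det_of_isUpperTriangular hA]
  exact Finset.dvd_prod_of_mem _ (Finset.mem_univ i)

theorem IsUpperTriangular.dotProduct_eq_one_and_mul_ne_zero [Nontrivial R] {A : Matrix ι ι R}
    (hA : A.IsUpperTriangular) (hdet : A.det = 1) {i₀ i₁ : ι} (h₀ : IsBot i₀) (h₀₁ : i₀ ≠ i₁) :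
    (A *ᵥ (Pi.single i₀ 1 + Pi.single i₁ 1)) ⬝ᵥ ((Aᵀ)⁻¹ *ᵥ Pi.single i₀ 1) = 1 ∧
      (A *ᵥ (Pi.single i₀ 1 + Pi.single i₁ 1)) i₁ * ((Aᵀ)⁻¹ *ᵥ Pi.single i₀ 1) i₀ ≠ 0 := by
  have hunit : IsUnit A.det := hdet ▸ isUnit_one
  have hw : Aᵀ *ᵥ ((Aᵀ)⁻¹ *ᵥ Pi.single i₀ 1) = Pi.single i₀ 1 := by
    rw [mulVec_mulVec, mul_nonsing_inv _ (by rwa [det_transpose]), one_mulVec]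
  have hw₀ : A i₀ i₀ * ((Aᵀ)⁻¹ *ᵥ Pi.single i₀ 1) i₀ = 1 := by
    rw [← hA.transpose_mulVec_apply_of_isBot h₀, hw, Pi.single_eq_same]
  have hv₁ : (A *ᵥ (Pi.single i₀ 1 + Pi.single i₁ 1)) i₁ = A i₁ i₁ := by
    simp [mulVec_add, hA ((h₀ i₁).lt_of_ne h₀₁)]
  refine ⟨?_, ?_⟩
  · rw [mulVec_dotProduct_transpose_inv_mulVec hunit]
    simp [h₀₁]
  rw [hv₁]
  exact ((hA.isUnit_apply_self_of_det_eq_one hdet i₁).mul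
    (IsUnit.of_mul_eq_one_right _ hw₀)).ne_zero

end CommRing

section Field

variable {K ι : Type*} [Field K] [LinearOrder ι]

/-- The middle columns are `e j - (w j / w i₀) • e i₀`, orthogonal to `w`; the `k`-th is rescaled
to make the determinant `1`. -/
noncomputable def orbitWitnessCol (i₀ k i₁ : ι) (v w : ι → K) (j : ι) : ι → K :=
  if j = i₀ then (w i₀)⁻¹ • Pi.single i₀ 1
  else if j = i₁ then v - (w i₀)⁻¹ • Pi.single i₀ 1
  else (if j = k then w i₀ / v i₁ else 1) • (Pi.single j 1 - (w j / w i₀) • Pi.single i₀ 1)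

noncomputable def orbitWitness (i₀ k i₁ : ι) (v w : ι → K) : Matrix ι ι K :=
  (of (orbitWitnessCol i₀ k i₁ v w))ᵀ

variable {i₀ k i₁ : ι} {v w : ι → K}

theorem orbitWitnessCol_left : orbitWitnessCol i₀ k i₁ v w i₀ = (w i₀)⁻¹ • Pi.single i₀ 1 :=
  if_pos rfl

theorem orbitWitnessCol_right (h₀₁ : i₀ ≠ i₁) :
    orbitWitnessCol i₀ k i₁ v w i₁ = v - (w i₀)⁻¹ • Pi.single i₀ 1 := by
  simp [orbitWitnessCol, h₀₁.symm]

theorem orbitWitnessCol_of_ne {j : ι} (hj₀ : j ≠ i₀) (hj₁ : j ≠ i₁) :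
    orbitWitnessCol i₀ k i₁ v w j =
      (if j = k then w i₀ / v i₁ else 1) • (Pi.single j 1 - (w j / w i₀) • Pi.single i₀ 1) := by
  simp [orbitWitnessCol, hj₀, hj₁]

theorem orbitWitness_isUpperTriangular (h₀ : IsBot i₀) (h₁ : IsTop i₁) :
    (orbitWitness i₀ k i₁ v w).IsUpperTriangular := by
  intro i j hji
  have hij : i ≠ j := hji.ne'
  have hi₀ : i ≠ i₀ := ((h₀ j).trans_lt hji).ne'
  have hj₁ : j ≠ i₁ := fun h => (h ▸ hji).not_ge (h₁ i)
  change orbitWitnessCol i₀ k i₁ v w j i = 0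
  by_cases hj₀ : j = i₀
  · simp [hj₀, orbitWitnessCol_left, hi₀]
  · simp [orbitWitnessCol_of_ne hj₀ hj₁, hij, hi₀]

theorem orbitWitness_apply_self (h₀₁ : i₀ ≠ i₁) (i : ι) :
    orbitWitness i₀ k i₁ v w i i =
      if i = i₀ then (w i₀)⁻¹ else if i = i₁ then v i₁ else if i = k then w i₀ / v i₁ else 1 := by
  change orbitWitnessCol i₀ k i₁ v w i i = _
  by_cases hi₀ : i = i₀
  · simp [hi₀, orbitWitnessCol_left]
  by_cases hi₁ : i = i₁
  · subst hi₁; simp [orbitWitnessCol_right h₀₁, hi₀]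
  · simp [orbitWitnessCol_of_ne hi₀ hi₁, hi₀, hi₁]

variable [Fintype ι]

theorem det_orbitWitness (h₀ : IsBot i₀) (h₁ : IsTop i₁) (h₀₁ : i₀ ≠ i₁) (hk₀ : k ≠ i₀)
    (hk₁ : k ≠ i₁) (hv : v i₁ ≠ 0) (hw : w i₀ ≠ 0) : (orbitWitness i₀ k i₁ v w).det = 1 := by
  rw [det_of_isUpperTriangular (orbitWitness_isUpperTriangular h₀ h₁),
    ← Finset.prod_subset (Finset.subset_univ {i₀, i₁, k}) fun i _ hi => ?_]
  · rw [Finset.prod_insert (by simp [h₀₁, hk₀.symm]), Finset.prod_insert (by simp [hk₁.symm]),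
      Finset.prod_singleton]
    simp only [orbitWitness_apply_self h₀₁, if_pos, if_neg h₀₁.symm, if_neg hk₀, if_neg hk₁]
    field_simp
  · simp only [Finset.mem_insert, Finset.mem_singleton, not_or] at hi
    simp [orbitWitness_apply_self h₀₁, hi.1, hi.2.1, hi.2.2]

theorem orbitWitness_mulVec (h₀₁ : i₀ ≠ i₁) :
    orbitWitness i₀ k i₁ v w *ᵥ (Pi.single i₀ 1 + Pi.single i₁ 1) = v := by
  rw [mulVec_add, mulVec_single_one, mulVec_single_one]
  change orbitWitnessCol i₀ k i₁ v w i₀ + orbitWitnessCol i₀ k i₁ v w i₁ = v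
  rw [orbitWitnessCol_left, orbitWitnessCol_right h₀₁, add_sub_cancel]

theorem transpose_orbitWitness_mulVec (hvw : v ⬝ᵥ w = 1) (hw : w i₀ ≠ 0) :
    (orbitWitness i₀ k i₁ v w)ᵀ *ᵥ w = Pi.single i₀ 1 := by
  ext j
  change orbitWitnessCol i₀ k i₁ v w j ⬝ᵥ w = _
  by_cases hj₀ : j = i₀
  · simp [hj₀, orbitWitnessCol_left, hw]
  by_cases hj₁ : j = i₁
  · subst hj₁; simp [orbitWitnessCol_right (Ne.symm hj₀), sub_dotProduct, hvw, hw, hj₀]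
  · rw [orbitWitnessCol_of_ne hj₀ hj₁, smul_dotProduct]
    simp [sub_dotProduct, hw, hj₀]

theorem exists_isUpperTriangular_of_dotProduct_eq_one (h₀ : IsBot i₀) (h₁ : IsTop i₁)
    (hk₀ : k ≠ i₀) (hk₁ : k ≠ i₁) (hvw : v ⬝ᵥ w = 1) (hv : v i₁ ≠ 0) (hw : w i₀ ≠ 0) :
    ∃ A : Matrix ι ι K, A.IsUpperTriangular ∧ A.det = 1 ∧
      A *ᵥ (Pi.single i₀ 1 + Pi.single i₁ 1) = v ∧ (Aᵀ)⁻¹ *ᵥ Pi.single i₀ 1 = w := by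
  have h₀₁ : i₀ ≠ i₁ := fun h => hk₀ (by subst h; exact (h₁ k).antisymm (h₀ k))
  have hdet := det_orbitWitness h₀ h₁ h₀₁ hk₀ hk₁ hv hw
  have : Invertible (orbitWitness i₀ k i₁ v w)ᵀ :=
    invertibleOfIsUnitDet _ (by rw [det_transpose, hdet]; exact isUnit_one)
  exact ⟨_, orbitWitness_isUpperTriangular h₀ h₁, hdet, orbitWitness_mulVec h₀₁,
    inv_mulVec_eq_vec (transpose_orbitWitness_mulVec hvw hw).symm⟩

end Field

end Matrix

/-- For `n ≥ 3` and `B ⊆ SL_n(ℂ)` the subgroup of upper triangular matrices,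
under the action `A · (v, w) = (A v, (Aᵀ)⁻¹ w)`, the `B`-orbit of `(e₁ + e_n, e₁)` is exactly
`{(v, w) : ∑ i, v i * w i = 1 ∧ v_n * w₁ ≠ 0}`. -/
theorem stmt1 (n : ℕ) (hn : 3 ≤ n) :
    {p : (Fin n → ℂ) × (Fin n → ℂ) |
      ∃ A : Matrix.SpecialLinearGroup (Fin n) ℂ,
        (∀ i j : Fin n, j < i → A.val i j = 0) ∧
        p.1 = A.val.mulVec
          (Pi.single (⟨0, by omega⟩ : Fin n) 1 + Pi.single (⟨n - 1, by omega⟩ : Fin n) 1) ∧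
        p.2 = (A.val.transpose)⁻¹.mulVec (Pi.single (⟨0, by omega⟩ : Fin n) 1)} =
    {p : (Fin n → ℂ) × (Fin n → ℂ) |
      (∑ i, p.1 i * p.2 i = 1) ∧ p.1 ⟨n - 1, by omega⟩ * p.2 ⟨0, by omega⟩ ≠ 0} := by
  have h₀ : IsBot (⟨0, by omega⟩ : Fin n) := fun _ => Nat.zero_le _
  have h₁ : IsTop (⟨n - 1, by omega⟩ : Fin n) := fun j => Nat.le_sub_one_of_lt j.isLt
  have hk₀ : (⟨1, by omega⟩ : Fin n) ≠ ⟨0, by omega⟩ := by simp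
  have hk₁ : (⟨1, by omega⟩ : Fin n) ≠ ⟨n - 1, by omega⟩ := by simp; omega
  ext ⟨v, w⟩
  constructor
  · rintro ⟨A, hA, rfl, rfl⟩
    exact IsUpperTriangular.dotProduct_eq_one_and_mul_ne_zero hA A.prop h₀ (by simp; omega)
  · rintro ⟨hvw, hne⟩
    obtain ⟨A, hA, hdet, hv, hw⟩ := exists_isUpperTriangular_of_dotProduct_eq_one h₀ h₁ hk₀ hk₁
      hvw (left_ne_zero_of_mul hne) (right_ne_zero_of_mul hne)
    exact ⟨⟨A, hdet⟩, hA, hv.symm, hw.symm⟩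
end

section
/- Let n ≥ 3 and let 0 < t < 1. Then the image of the set X = {(v,w) ∈ ℂⁿ × ℂⁿ : ∑_{i=1}^n v_i w_i = 1} under the map (v,w) ↦ ( log_t(∑_{i=1}^n |v_i|²), log_t(∑_{i=1}^n |w_i|²) ) is exactly the closed half-plane {(a,b) ∈ ℝ² : a + b ≤ 0}. -/
/-!
On `X` the Cauchy–Schwarz inequality gives `1 = |∑ vᵢ wᵢ|² ≤ (∑ |vᵢ|²)(∑ |wᵢ|²)`, and since
`0 < t < 1` the map `log_t` turns `1 ≤ xy` into `log_t x + log_t y ≤ 0`. Conversely, every pair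
`(x, y)` with `1 ≤ xy` is attained on `X` using only two coordinates:
`v = √x e₀`, `w = (√x)⁻¹ e₀ + √(y - x⁻¹) e₁`.
-/

open Finset

lemma norm_sum_mul_sq_le_sum_norm_sq_mul {ι R : Type*} [Fintype ι] [SeminormedRing R]
    (v w : ι → R) :
    ‖∑ i, v i * w i‖ ^ 2 ≤ (∑ i, ‖v i‖ ^ 2) * ∑ i, ‖w i‖ ^ 2 :=
  calc ‖∑ i, v i * w i‖ ^ 2 ≤ (∑ i, ‖v i‖ * ‖w i‖) ^ 2 := by
        gcongr
        exact (norm_sum_le _ _).trans (sum_le_sum fun i _ => norm_mul_le _ _)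
    _ ≤ (∑ i, ‖v i‖ ^ 2) * ∑ i, ‖w i‖ ^ 2 := sum_mul_sq_le_sq_mul_sq _ _ _

lemma one_le_sum_norm_sq_mul_of_sum_mul_eq_one {ι R : Type*} [Fintype ι] [SeminormedRing R]
    [NormOneClass R] {v w : ι → R} (h : ∑ i, v i * w i = 1) :
    1 ≤ (∑ i, ‖v i‖ ^ 2) * ∑ i, ‖w i‖ ^ 2 := by
  simpa [h] using norm_sum_mul_sq_le_sum_norm_sq_mul v w

lemma exists_sum_mul_eq_one_sum_norm_sq_eq {ι : Type*} [Fintype ι] {i j : ι} (hij : i ≠ j)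
    {x y : ℝ} (hx : 0 < x) (hxy : 1 ≤ x * y) :
    ∃ v w : ι → ℂ, ∑ k, v k * w k = 1 ∧ ∑ k, ‖v k‖ ^ 2 = x ∧ ∑ k, ‖w k‖ ^ 2 = y := by
  classical
  have hy : x⁻¹ ≤ y := by rwa [inv_le_iff_one_le_mul₀' hx]
  have hsx : Real.sqrt x ≠ 0 := (Real.sqrt_pos.2 hx).ne'
  set v : ι → ℂ := Pi.single i (Real.sqrt x : ℂ)
  set w : ι → ℂ := Pi.single i ((Real.sqrt x)⁻¹ : ℂ) + Pi.single j (Real.sqrt (y - x⁻¹) : ℂ)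
  refine ⟨v, w, ?_, ?_, ?_⟩
  · rw [Fintype.sum_eq_single i fun k hk => by simp [v, hk]]
    simp [v, w, hij, hsx]
  · rw [Fintype.sum_eq_add i j hij fun k hk => by simp [v, hk.1]]
    simp [v, hij.symm, Complex.norm_real, Real.sq_sqrt hx.le]
  · rw [Fintype.sum_eq_add i j hij fun k hk => by simp [w, hk.1, hk.2]]
    simp [w, hij, hij.symm, Complex.norm_real, Real.sq_sqrt hx.le,
      Real.sq_sqrt (sub_nonneg.2 hy)]

lemma logb_add_logb_nonpos_iff_of_base_lt_one {b x y : ℝ} (hb0 : 0 < b) (hb1 : b < 1)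
    (hx : 0 < x) (hy : 0 < y) : Real.logb b x + Real.logb b y ≤ 0 ↔ 1 ≤ x * y := by
  rw [← Real.logb_mul hx.ne' hy.ne', Real.logb_nonpos_iff_of_base_lt_one hb0 hb1 (mul_pos hx hy)]

/-- For `n ≥ 3` and `0 < t < 1`, the image of
`X = {(v, w) ∈ ℂⁿ × ℂⁿ : ∑ vᵢ wᵢ = 1}` under the spherical logarithm map
`(v, w) ↦ (log_t ∑ |vᵢ|², log_t ∑ |wᵢ|²)` is exactly the half-plane `{(a, b) : a + b ≤ 0}`. -/
theorem stmt7 (n : ℕ) (hn : 3 ≤ n) (t : ℝ) (ht0 : 0 < t) (ht1 : t < 1) :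
    (fun p : (Fin n → ℂ) × (Fin n → ℂ) =>
        ((Real.logb t (∑ i, ‖p.1 i‖ ^ 2),
          Real.logb t (∑ i, ‖p.2 i‖ ^ 2)) : ℝ × ℝ)) ''
      {p : (Fin n → ℂ) × (Fin n → ℂ) | ∑ i, p.1 i * p.2 i = 1} =
    {q : ℝ × ℝ | q.1 + q.2 ≤ 0} := by
  ext ⟨a, b⟩
  constructor
  · rintro ⟨⟨v, w⟩, hvw, hab⟩
    obtain ⟨rfl, rfl⟩ := Prod.mk.inj hab
    have h_one_le := one_le_sum_norm_sq_mul_of_sum_mul_eq_one hvw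
    have h_pos := zero_lt_one.trans_le h_one_le
    exact (logb_add_logb_nonpos_iff_of_base_lt_one ht0 ht1
      (pos_of_mul_pos_left h_pos (by positivity)) (pos_of_mul_pos_right h_pos (by positivity))).2 h_one_le
  · intro hab
    have h_one_le : 1 ≤ t ^ a * t ^ b := by
      rwa [← logb_add_logb_nonpos_iff_of_base_lt_one ht0 ht1 (by positivity) (by positivity),
        Real.logb_rpow ht0 ht1.ne, Real.logb_rpow ht0 ht1.ne]
    obtain ⟨v, w, hvw, hv, hw⟩ := exists_sum_mul_eq_one_sum_norm_sq_eq
      (i := (⟨0, by omega⟩ : Fin n)) (j := ⟨1, by omega⟩) (by simp) (by positivity) h_one_le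
    exact ⟨(v, w), hvw, by simp [hv, hw, Real.logb_rpow ht0 ht1.ne]⟩
end

section
/- Let 0 < t < 1. For A, B ∈ SL₂(ℂ) set Φ(A,B) = (1/2) ∑_{i,j ∈ {1,2}} |A_{i1}B_{j2} − A_{i2}B_{j1}|². Then the image of the map SL₂(ℂ)³ → ℝ³ sending (A,B,C) to ( log_t Φ(A,B), log_t Φ(A,C), log_t Φ(B,C) ) is exactly the set { ( log_t x, log_t y, log_t z ) : x ≥ 1, y ≥ 1, z ≥ 1, and 1 + 2xyz − x² − y² − z² ≥ 0 }. -/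
/-!
Writing `‖·‖` for the Frobenius norm, `Φ(A, B) = ½‖A B⁻¹‖²`, so with `U = A B⁻¹` and `V = B C⁻¹`
the three values are `x = ½‖U‖²`, `y = ½‖U V‖²` and `z = ½‖V‖²`.

Necessity: `x = ½‖U‖²` and the coordinates `P ∈ ℝ³` of the trace-free part of `Uᴴ U` form a point
`(x, P)` of the hyperboloid `x² - ‖P‖² = 1` (its Minkowski norm is `|det U|²`), and
`y = x z + ⟪P, Q⟫` where `(z, Q)` is the point of `Vᴴ`. Then
`1 + 2xyz - x² - y² - z² = ‖P‖²‖Q‖² - ⟪P, Q⟫²`, which is nonnegative by Cauchy–Schwarz.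

Sufficiency: for `U = diag(a, a⁻¹)` and `V = [[c, 0], [u, c⁻¹]]` with `a, c > 0` and `u` real,
`2x = a² + a⁻²`, `2z = c² + u² + c⁻²` and `2y = a²c² + a⁻²u² + a⁻²c⁻²`. Taking `s = √(x² - 1)`,
`a² = x + s` and `c² = z + (y - xz)/s` solves these, and the constraint is exactly `u² ≥ 0`.
-/

open Matrix
open scoped MatrixGroups InnerProductSpace

/-- The spherical function `φ_{Ω₁₂}` of `(SL₂(ℂ))³/SL₂(ℂ)_diag` evaluated at `(A, B, ·)`:
`Φ(A,B) = (1/2) ∑_{i,j} |A_{i1} B_{j2} − A_{i2} B_{j1}|²`. -/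
noncomputable def sphPhi (A B : Matrix.SpecialLinearGroup (Fin 2) ℂ) : ℝ :=
  (1 / 2 : ℝ) * ∑ i : Fin 2, ∑ j : Fin 2,
    ‖A.val i 0 * B.val j 1 - A.val i 1 * B.val j 0‖ ^ 2

/-- `x, y, z` are the hyperbolic cosines of the sides of a (possibly degenerate) hyperbolic
triangle. -/
def IsCoshTriangle (x y z : ℝ) : Prop :=
  1 ≤ x ∧ 1 ≤ y ∧ 1 ≤ z ∧ 0 ≤ 1 + 2 * x * y * z - x ^ 2 - y ^ 2 - z ^ 2

theorem isCoshTriangle_of_hyperboloid {E : Type*} [NormedAddCommGroup E] [InnerProductSpace ℝ E]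
    {x z : ℝ} {P Q : E} (hx : 0 ≤ x) (hz : 0 ≤ z) (hP : x ^ 2 - 1 = ‖P‖ ^ 2)
    (hQ : z ^ 2 - 1 = ‖Q‖ ^ 2) : IsCoshTriangle x (x * z + ⟪P, Q⟫_ℝ) z := by
  have hx1 : 1 ≤ x := by nlinarith [sq_nonneg ‖P‖]
  have hz1 : 1 ≤ z := by nlinarith [sq_nonneg ‖Q‖]
  have hCS := abs_le.mp (abs_real_inner_le_norm P Q)
  have hPQ : ‖P‖ * ‖Q‖ ≤ x * z - 1 := by
    refine (abs_le_of_sq_le_sq' ?_ (by nlinarith)).2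
    nlinarith [sq_nonneg (x - z)]
  have hgram : 1 + 2 * x * (x * z + ⟪P, Q⟫_ℝ) * z - x ^ 2 - (x * z + ⟪P, Q⟫_ℝ) ^ 2 - z ^ 2 =
      (‖P‖ * ‖Q‖) ^ 2 - ⟪P, Q⟫_ℝ ^ 2 := by
    linear_combination (z ^ 2 - 1) * hP + ‖P‖ ^ 2 * hQ
  refine ⟨hx1, by linarith, hz1, ?_⟩
  rw [hgram, sub_nonneg]
  exact sq_le_sq' hCS.1 hCS.2

noncomputable def halfFrobNormSq {m n : Type*} [Fintype m] [Fintype n] (U : Matrix m n ℂ) : ℝ :=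
  (∑ i, ∑ j, ‖U i j‖ ^ 2) / 2

noncomputable def pauliCoords (U : Matrix (Fin 2) (Fin 2) ℂ) : EuclideanSpace ℝ (Fin 3) :=
  let H := Uᴴ * U
  !₂[(H 0 1).re, (H 0 1).im, (H 0 0 - H 1 1).re / 2]

theorem halfFrobNormSq_nonneg {m n : Type*} [Fintype m] [Fintype n] (U : Matrix m n ℂ) :
    0 ≤ halfFrobNormSq U := by
  unfold halfFrobNormSq
  positivity

theorem halfFrobNormSq_conjTranspose {m n : Type*} [Fintype m] [Fintype n] (U : Matrix m n ℂ) :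
    halfFrobNormSq Uᴴ = halfFrobNormSq U := by
  simp only [halfFrobNormSq, conjTranspose_apply, norm_star]
  rw [Finset.sum_comm]

theorem halfFrobNormSq_sq_sub_norm_sq (U : Matrix (Fin 2) (Fin 2) ℂ) :
    halfFrobNormSq U ^ 2 - ‖pauliCoords U‖ ^ 2 = ‖U.det‖ ^ 2 := by
  simp only [halfFrobNormSq, pauliCoords, EuclideanSpace.norm_sq_eq, det_fin_two, Fin.sum_univ_two,
    Fin.sum_univ_three, mul_apply, conjTranspose_apply, Complex.sq_norm, Complex.normSq_apply,
    cons_val_zero, cons_val_one, cons_val, RCLike.star_def, Complex.add_re, Complex.add_im,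
    Complex.sub_re, Complex.sub_im, Complex.mul_re, Complex.mul_im, Complex.conj_re, Complex.conj_im,
    Real.norm_eq_abs, div_pow, sq_abs]
  ring

theorem halfFrobNormSq_sq_sub_one {U : Matrix (Fin 2) (Fin 2) ℂ} (hU : U.det = 1) :
    halfFrobNormSq U ^ 2 - 1 = ‖pauliCoords U‖ ^ 2 := by
  linear_combination halfFrobNormSq_sq_sub_norm_sq U + (by simp [hU] : ‖U.det‖ ^ 2 = 1)

theorem halfFrobNormSq_mul (U V : Matrix (Fin 2) (Fin 2) ℂ) :
    halfFrobNormSq (U * V) =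
      halfFrobNormSq U * halfFrobNormSq V + ⟪pauliCoords U, pauliCoords Vᴴ⟫_ℝ := by
  simp only [halfFrobNormSq, pauliCoords, EuclideanSpace.inner_eq_star_dotProduct, dotProduct,
    Fin.sum_univ_two, Fin.sum_univ_three, mul_apply, conjTranspose_apply, Complex.sq_norm,
    Complex.normSq_apply, cons_val_zero, cons_val_one, cons_val, Pi.star_apply, star_trivial,
    RCLike.star_def, Complex.add_re, Complex.add_im, Complex.sub_re, Complex.mul_re,
    Complex.mul_im, Complex.conj_re, Complex.conj_im]
  ring

theorem isCoshTriangle_halfFrobNormSq_mul {U V : Matrix (Fin 2) (Fin 2) ℂ} (hU : U.det = 1)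
    (hV : V.det = 1) :
    IsCoshTriangle (halfFrobNormSq U) (halfFrobNormSq (U * V)) (halfFrobNormSq V) := by
  have hV' : Vᴴ.det = 1 := by simp [hV]
  rw [halfFrobNormSq_mul]
  refine isCoshTriangle_of_hyperboloid (halfFrobNormSq_nonneg U) (halfFrobNormSq_nonneg V)
    (halfFrobNormSq_sq_sub_one hU) ?_
  rw [← halfFrobNormSq_conjTranspose V]
  exact halfFrobNormSq_sq_sub_one hV'

def lowerTriSL (c : ℂˣ) (u : ℂ) : SL(2, ℂ) :=
  ⟨!![(c : ℂ), 0; u, ↑c⁻¹], by simp [det_fin_two]⟩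

theorem lowerTriSL_mul_lowerTriSL (a c : ℂˣ) (u : ℂ) :
    lowerTriSL a 0 * lowerTriSL c u = lowerTriSL (a * c) (↑a⁻¹ * u) := by
  ext : 1
  rw [Matrix.SpecialLinearGroup.coe_mul]
  simp [lowerTriSL, mul_comm]

theorem halfFrobNormSq_lowerTriSL (c : ℂˣ) (u : ℂ) :
    halfFrobNormSq (lowerTriSL c u : Matrix (Fin 2) (Fin 2) ℂ) =
      (‖(c : ℂ)‖ ^ 2 + ‖u‖ ^ 2 + ‖(c : ℂ)‖⁻¹ ^ 2) / 2 := by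
  simp only [halfFrobNormSq, lowerTriSL, of_apply, cons_val', cons_val_fin_one, cons_val_zero,
    cons_val_one, Fin.sum_univ_two, Units.val_inv_eq_inv_val, norm_zero, norm_inv, inv_pow]
  ring

theorem IsCoshTriangle.exists_lowerTriSL_params {x y z : ℝ} (h : IsCoshTriangle x y z) :
    ∃ β m k : ℝ, 0 < β ∧ 0 < m ∧ 0 ≤ k ∧ (β + β⁻¹) / 2 = x ∧
      (β * m + β⁻¹ * k + (β * m)⁻¹) / 2 = y ∧ (m + k + m⁻¹) / 2 = z := by
  obtain ⟨hx, -, hz, hD⟩ := h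
  set s := √(x ^ 2 - 1)
  have hs : s ^ 2 = x ^ 2 - 1 := Real.sq_sqrt (by nlinarith)
  have hs0 : 0 ≤ s := Real.sqrt_nonneg _
  have hgram : (y - x * z) ^ 2 ≤ s ^ 2 * (z ^ 2 - 1) := by rw [hs]; linarith
  -- if `s = 0` the constraint forces `y = x z`, so the junk value `w = 0` still works
  set w := (y - x * z) / s
  have hsw : w * s = y - x * z := div_mul_cancel_of_imp fun h0 => by
    rw [h0] at hgram; nlinarith
  have hw : w ^ 2 ≤ z ^ 2 - 1 := by
    rcases hs0.eq_or_lt with h0 | hpos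
    · simp only [w, ← h0, div_zero]; nlinarith
    · rw [← hsw, mul_pow] at hgram
      exact le_of_mul_le_mul_right (by linarith) (pow_pos hpos 2)
  have hβ : 0 < x + s := by linarith
  have hβinv : (x + s)⁻¹ = x - s := inv_eq_of_mul_eq_one_right (by linear_combination -hs)
  have hm : 0 < z + w := by nlinarith
  refine ⟨x + s, z + w, z - w - (z + w)⁻¹, hβ, hm, ?_, ?_, ?_, ?_⟩
  · rw [sub_nonneg, inv_le_iff_one_le_mul₀ hm]; nlinarith
  · rw [hβinv]; ring
  · rw [mul_inv, hβinv]; linear_combination hsw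
  · ring

theorem IsCoshTriangle.exists_sl2 {x y z : ℝ} (h : IsCoshTriangle x y z) :
    ∃ U V : SL(2, ℂ), halfFrobNormSq (U : Matrix (Fin 2) (Fin 2) ℂ) = x ∧
      halfFrobNormSq ((U * V : SL(2, ℂ)) : Matrix (Fin 2) (Fin 2) ℂ) = y ∧
      halfFrobNormSq (V : Matrix (Fin 2) (Fin 2) ℂ) = z := by
  obtain ⟨β, m, k, hβ, hm, hk, rfl, rfl, rfl⟩ := h.exists_lowerTriSL_params
  let a := Units.mk0 ((√β : ℝ) : ℂ) (by simp [hβ.ne', hβ.le])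
  let c := Units.mk0 ((√m : ℝ) : ℂ) (by simp [hm.ne', hm.le])
  refine ⟨lowerTriSL a 0, lowerTriSL c (√k : ℝ), ?_, ?_, ?_⟩
  · simp [halfFrobNormSq_lowerTriSL, a, Real.sq_sqrt hβ.le]
  · rw [lowerTriSL_mul_lowerTriSL, halfFrobNormSq_lowerTriSL]
    simp [a, c, mul_pow, Real.sq_sqrt, hβ.le, hm.le, hk, mul_comm]
  · simp [halfFrobNormSq_lowerTriSL, c, Real.sq_sqrt, hm.le, hk]

theorem sphPhi_eq_halfFrobNormSq (A B : SL(2, ℂ)) :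
    sphPhi A B = halfFrobNormSq ((A * B⁻¹ : SL(2, ℂ)) : Matrix (Fin 2) (Fin 2) ℂ) := by
  rw [Matrix.SpecialLinearGroup.coe_mul, Matrix.SpecialLinearGroup.coe_inv, adjugate_fin_two]
  simp only [sphPhi, halfFrobNormSq, Fin.sum_univ_two, mul_apply, of_apply, cons_val',
    cons_val_zero, cons_val_one, empty_val', cons_val_fin_one, mul_neg, ← sub_eq_add_neg,
    neg_add_eq_sub]
  rw [norm_sub_rev (_ * B.val 0 0), norm_sub_rev (_ * B.val 0 0)]
  ring

theorem stmt12_general (t : ℝ) :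
    Set.range (fun p : Matrix.SpecialLinearGroup (Fin 2) ℂ ×
        Matrix.SpecialLinearGroup (Fin 2) ℂ × Matrix.SpecialLinearGroup (Fin 2) ℂ =>
      ((Real.logb t (sphPhi p.1 p.2.1), Real.logb t (sphPhi p.1 p.2.2),
        Real.logb t (sphPhi p.2.1 p.2.2)) : ℝ × ℝ × ℝ)) =
    {q : ℝ × ℝ × ℝ | ∃ x y z : ℝ, 1 ≤ x ∧ 1 ≤ y ∧ 1 ≤ z ∧
      0 ≤ 1 + 2 * x * y * z - x ^ 2 - y ^ 2 - z ^ 2 ∧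
      q = (Real.logb t x, Real.logb t y, Real.logb t z)} := by
  ext q
  simp only [Set.mem_range, Set.mem_ofPred_eq, sphPhi_eq_halfFrobNormSq]
  constructor
  · rintro ⟨⟨A, B, C⟩, rfl⟩
    have h := isCoshTriangle_halfFrobNormSq_mul (A * B⁻¹).prop (B * C⁻¹).prop
    rw [← Matrix.SpecialLinearGroup.coe_mul, show A * B⁻¹ * (B * C⁻¹) = A * C⁻¹ by group] at h
    exact ⟨_, _, _, h.1, h.2.1, h.2.2.1, h.2.2.2, rfl⟩
  · rintro ⟨x, y, z, hx, hy, hz, hD, rfl⟩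
    obtain ⟨U, V, rfl, rfl, rfl⟩ := IsCoshTriangle.exists_sl2 ⟨hx, hy, hz, hD⟩
    exact ⟨(U * V, V, 1), by simp⟩

/-- For `0 < t < 1`, the image of the spherical logarithm map
`(A, B, C) ↦ (log_t Φ(A,B), log_t Φ(A,C), log_t Φ(B,C))` on `SL₂(ℂ)³` is exactly
`{(log_t x, log_t y, log_t z) : x, y, z ≥ 1, 1 + 2xyz − x² − y² − z² ≥ 0}`. -/
theorem stmt12 (t : ℝ) (ht0 : 0 < t) (ht1 : t < 1) :
    Set.range (fun p : Matrix.SpecialLinearGroup (Fin 2) ℂ ×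
        Matrix.SpecialLinearGroup (Fin 2) ℂ × Matrix.SpecialLinearGroup (Fin 2) ℂ =>
      ((Real.logb t (sphPhi p.1 p.2.1), Real.logb t (sphPhi p.1 p.2.2),
        Real.logb t (sphPhi p.2.1 p.2.2)) : ℝ × ℝ × ℝ)) =
    {q : ℝ × ℝ × ℝ | ∃ x y z : ℝ, 1 ≤ x ∧ 1 ≤ y ∧ 1 ≤ z ∧
      0 ≤ 1 + 2 * x * y * z - x ^ 2 - y ^ 2 - z ^ 2 ∧
      q = (Real.logb t x, Real.logb t y, Real.logb t z)} :=
  stmt12_general t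
end

section
/- Let a, b, c be negative real numbers, and suppose there exists t₀ ∈ (0,1) such that for all t with 0 < t < t₀ one has 1 + 2·t^{a+b+c} − t^{2a} − t^{2b} − t^{2c} ≥ 0. Then b + c ≤ a, a + c ≤ b, and a + b ≤ c (equivalently, |a| ≤ |b| + |c|, |b| ≤ |a| + |c|, and |c| ≤ |a| + |b|). -/
/-!
Put `s = a + b + c ≤ 0` and `d = a - b - c`, so that `2a = s + d`. If `b + c > a` then `d < 0`,
hence `t ^ d → ∞` as `t → 0⁺` while `t ^ s ≥ 1` for `t ≤ 1`. Once `t ^ d > 3` the term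
`t ^ (2a) = t ^ s * t ^ d` alone exceeds `1 + 2 t ^ s`, contradicting the hypothesis.
The other two inequalities follow by permuting `a, b, c`.
-/

open Filter Topology

theorem add_le_of_eventually_nonneg {a b c : ℝ} (habc : a + b + c ≤ 0)
    (h : ∀ᶠ t in 𝓝[>] (0 : ℝ),
      0 ≤ 1 + 2 * t ^ (a + b + c) - t ^ (2 * a) - t ^ (2 * b) - t ^ (2 * c)) :
    b + c ≤ a := by
  by_contra! hlt
  have hd : a - b - c < 0 := by linarith
  obtain ⟨t, ⟨⟨hnonneg, hlarge⟩, ht1⟩, ht0 : 0 < t⟩ :=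
    ((h.and ((tendsto_rpow_neg_nhdsGT_zero hd).eventually_gt_atTop 3)).and
      (Iio_mem_nhds one_pos |> nhdsWithin_le_nhds)).and self_mem_nhdsWithin |>.exists
  have hsplit : t ^ (2 * a) = t ^ (a + b + c) * t ^ (a - b - c) := by
    rw [← Real.rpow_add ht0]; ring_nf
  have hX : 1 ≤ t ^ (a + b + c) :=
    Real.one_le_rpow_of_pos_of_le_one_of_nonpos ht0 ht1.le habc
  rw [hsplit] at hnonneg
  nlinarith [Real.rpow_pos_of_pos ht0 (2 * b), Real.rpow_pos_of_pos ht0 (2 * c)]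

theorem stmt13_general (a b c : ℝ) (ha : a < 0) (hb : b < 0) (hc : c < 0)
    (t₀ : ℝ) (ht₀0 : 0 < t₀)
    (h : ∀ t : ℝ, 0 < t → t < t₀ →
      0 ≤ 1 + 2 * t ^ (a + b + c) - t ^ (2 * a) - t ^ (2 * b) - t ^ (2 * c)) :
    b + c ≤ a ∧ a + c ≤ b ∧ a + b ≤ c := by
  have hnonneg : ∀ᶠ t in 𝓝[>] (0 : ℝ),
      0 ≤ 1 + 2 * t ^ (a + b + c) - t ^ (2 * a) - t ^ (2 * b) - t ^ (2 * c) := by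
    filter_upwards [Ioo_mem_nhdsGT ht₀0] with t ht using h t ht.1 ht.2
  refine ⟨add_le_of_eventually_nonneg (by linarith) hnonneg,
    add_le_of_eventually_nonneg (b := a) (by linarith) ?_,
    add_le_of_eventually_nonneg (b := a) (c := b) (by linarith) ?_⟩
  · filter_upwards [hnonneg] with t ht
    rw [add_comm b a]
    linarith
  · filter_upwards [hnonneg] with t ht
    rw [add_rotate c a b]
    linarith

/-- If `a, b, c < 0` and for all sufficiently small `t ∈ (0, 1)` one has
`1 + 2 t^{a+b+c} − t^{2a} − t^{2b} − t^{2c} ≥ 0`, then `b + c ≤ a`, `a + c ≤ b`, `a + b ≤ c`. -/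
theorem stmt13 (a b c : ℝ) (ha : a < 0) (hb : b < 0) (hc : c < 0)
    (t₀ : ℝ) (ht₀0 : 0 < t₀) (ht₀1 : t₀ < 1)
    (h : ∀ t : ℝ, 0 < t → t < t₀ →
      0 ≤ 1 + 2 * t ^ (a + b + c) - t ^ (2 * a) - t ^ (2 * b) - t ^ (2 * c)) :
    b + c ≤ a ∧ a + c ≤ b ∧ a + b ≤ c :=
  stmt13_general a b c ha hb hc t₀ ht₀0 h
end

section
/- Let n ≥ 2 and let t > 0 with t ≠ 1. For A ∈ SL_n(ℂ) and 1 ≤ i ≤ n−1, let φ_i(A) = ∑_I |p_{I,{1,…,i}}(A)|², where the sum runs over all i-element subsets I ⊆ {1,…,n} and p_{I,{1,…,i}}(A) is the determinant of the i × i submatrix of A with rows indexed by I and columns 1,…,i (the flag minors). Then the map SL_n(ℂ) → ℝ^{n−1} sending A to ( log_t φ₁(A), …, log_t φ_{n−1}(A) ) is surjective. -/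
/-!
On a diagonal matrix `diag(d₁, …, dₙ)` the only nonvanishing flag minor with columns `1, …, m`
is the leading principal one, so `φₘ` takes the value `|d₁ ⋯ dₘ|²`. Given the target values, take
real numbers `xₘ` with `x₀ = xₙ = 0` and `2 xₘ = cₘ log t`, and `dⱼ = exp (xⱼ - xⱼ₋₁)`: the partial
products telescope to `exp xₘ`, and the full product `exp xₙ = 1` makes the matrix unimodular.
-/

open Finset Matrix

namespace Matrix

variable {R : Type*} [CommRing R] {m n : ℕ}

theorem det_diagonal_submatrix_orderEmbOfFin_castLE (d : Fin n → R) (h : m ≤ n)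
    (I : Finset (Fin n)) (hI : #I = m) :
    ((diagonal d).submatrix (I.orderEmbOfFin hI) (Fin.castLE h)).det =
      if I = univ.map (Fin.castLEEmb h) then ∏ k, d (Fin.castLE h k) else 0 := by
  split_ifs with hI₀
  · have hrows : Fin.castLE h = I.orderEmbOfFin hI :=
      orderEmbOfFin_unique hI (fun k => hI₀ ▸ mem_map_of_mem _ (mem_univ k))
        (Fin.strictMono_castLE h)
    rw [← hrows]
    exact (congrArg det (submatrix_diagonal_embedding d (Fin.castLEEmb h))).trans det_diagonal
  · obtain ⟨l, hl⟩ : ∃ l, Fin.castLE h l ∉ I := by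
      by_contra! hsub
      refine hI₀ (eq_of_subset_of_card_le ?_ (by simp [hI])).symm
      rintro _ hj
      obtain ⟨k, -, rfl⟩ := mem_map.mp hj
      exact hsub k
    refine det_eq_zero_of_column_eq_zero l fun k => diagonal_apply_ne _ fun hkl => hl ?_
    exact hkl ▸ orderEmbOfFin_mem I hI k

theorem sum_powersetCard_diagonal_minor {M : Type*} [AddCommMonoid M] (g : R → M)
    (hg : g 0 = 0) (d : Fin n → R) (h : m ≤ n) :
    ∑ I ∈ (univ.powersetCard m).attach,
        g ((diagonal d).submatrix (I.1.orderEmbOfFin (mem_powersetCard.mp I.2).2)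
          (Fin.castLE h)).det =
      g (∏ k, d (Fin.castLE h k)) := by
  simp only [det_diagonal_submatrix_orderEmbOfFin_castLE, apply_ite g, hg]
  rw [sum_attach (univ.powersetCard m) (fun I =>
    if I = univ.map (Fin.castLEEmb h) then g (∏ k, d (Fin.castLE h k)) else 0), sum_ite_eq']
  simp [card_map]

end Matrix

theorem Real.prod_exp_sub_castLE {m n : ℕ} (x : ℕ → ℝ) (h : m ≤ n) :
    ∏ k : Fin m, Real.exp (x (Fin.castLE h k + 1) - x (Fin.castLE h k)) =
      Real.exp (x m - x 0) := by
  rw [← Real.exp_sum]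
  simp only [Fin.val_castLE]
  rw [Fin.sum_univ_eq_sum_range (fun k => x (k + 1) - x k), sum_range_sub]

/-- For `n ≥ 2`, `t > 0`, `t ≠ 1`, the spherical logarithm map
`A ↦ (log_t φ₁(A), …, log_t φ_{n−1}(A))` on `SL_n(ℂ)` is surjective onto `ℝ^{n−1}`, where
`φᵢ(A) = ∑_I |p_{I,{1,…,i}}(A)|²`, the sum of squared absolute values of the `i × i` flag
minors of `A` (rows `I`, columns `1, …, i`). -/
theorem stmt17 (n : ℕ) (t : ℝ) (ht0 : 0 < t) (ht1 : t ≠ 1) :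
    Function.Surjective (fun A : Matrix.SpecialLinearGroup (Fin n) ℂ =>
      (fun i : Fin (n - 1) =>
        Real.logb t
          (∑ I ∈ ((Finset.univ : Finset (Fin n)).powersetCard ((i : ℕ) + 1)).attach,
            norm
              ((A.val.submatrix
                (I.1.orderEmbOfFin ((Finset.mem_powersetCard.mp I.2).2))
                (fun k : Fin ((i : ℕ) + 1) =>
                  Fin.castLE (by omega : (i : ℕ) + 1 ≤ n) k)).det) ^ 2) : Fin (n - 1) → ℝ)) := by
  intro c
  let x : ℕ → ℝ := fun k =>
    if h : 0 < k ∧ k < n then c ⟨k - 1, by omega⟩ * Real.log t / 2 else 0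
  let d : Fin n → ℂ := fun j => (Real.exp (x (j + 1) - x j) : ℂ)
  have hprod (m : ℕ) (h : m ≤ n) : ∏ k, d (Fin.castLE h k) = Real.exp (x m) := by
    rw [← Complex.ofReal_prod, Real.prod_exp_sub_castLE x h]
    simp [x]
  have hdet : (diagonal d).det = 1 := by
    simpa [Fin.castLE_rfl, x] using det_diagonal.trans (hprod n le_rfl)
  refine ⟨⟨diagonal d, hdet⟩, funext fun i => ?_⟩
  have hsum := sum_powersetCard_diagonal_minor (fun z : ℂ => ‖z‖ ^ 2) (by simp) d
    (show (i : ℕ) + 1 ≤ n by omega)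
  have hxi : x (i + 1) = c i * Real.log t / 2 := by simp [x, show (i : ℕ) + 1 < n by omega]
  have hlog : Real.log t ≠ 0 := Real.log_ne_zero_of_pos_of_ne_one ht0 ht1
  simp only at hsum ⊢
  rw [hsum, hprod, Complex.norm_real, Real.norm_of_nonneg (Real.exp_pos _).le,
    ← Real.exp_nat_mul, Real.logb, Real.log_exp, hxi, Nat.cast_ofNat]
  field_simp
end
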